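/- arXiv:2302.03964 — 3 statements merged into one kernel-verified Lean document; each statement's English description precedes it below -/
import Mathlib

section
/- Let p be a rational prime unramified in the number field K and let 𝔭 be a prime ideal of 𝒪_K above p. Let γ, λ ∈ 𝒪_K be coprime to 𝔭 and such that γ^t ≠ λ^t for every integer t ≠ 0. Set τ_*(γ,λ) = τ_1(γ,λ) if p ≠ 2 and τ_*(γ,λ) = τ_2(γ,λ) if p = 2, and let β_𝔭(γ,λ) = ν_𝔭(γ^{τ_*(γ,λ)} − λ^{τ_*(γ,λ)}). Then for every integer s ≥ 2: if s ≤ β_𝔭(γ,λ) then τ_s(γ,λ) = τ_*(γ,λ), and if s ≥ β_𝔭(γ,λ) then τ_s(γ,λ) = τ_*(γ,λ) · p^{s − β_𝔭(γ,λ)}. -/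
open NumberField Finset

section Aux
variable {R : Type*} [CommRing R] [IsDedekindDomain R] {𝔭 : Ideal R}

lemma aux_primary (h𝔭 : 𝔭.IsPrime) (hbot : 𝔭 ≠ ⊥) {z w : R} {n : ℕ}
    (hz : z ∉ 𝔭) (h : z * w ∈ 𝔭 ^ n) : w ∈ 𝔭 ^ n := by
  have hP : Prime 𝔭 := Ideal.prime_of_isPrime hbot h𝔭
  rw [← Ideal.dvd_span_singleton] at h ⊢
  rw [← Ideal.span_singleton_mul_span_singleton] at h
  refine hP.pow_dvd_of_dvd_mul_left _ ?_ h
  rw [Ideal.dvd_span_singleton]; exact hz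

lemma aux_exact_mul (h𝔭 : 𝔭.IsPrime) (hbot : 𝔭 ≠ ⊥) {z w : R} {a b : ℕ}
    (hz1 : z ∈ 𝔭 ^ a) (hz2 : z ∉ 𝔭 ^ (a + 1)) (hw1 : w ∈ 𝔭 ^ b) (hw2 : w ∉ 𝔭 ^ (b + 1)) :
    z * w ∈ 𝔭 ^ (a + b) ∧ z * w ∉ 𝔭 ^ (a + b + 1) := by
  have hP : Prime 𝔭 := Ideal.prime_of_isPrime hbot h𝔭
  have h0 : (𝔭 : Ideal R) ≠ 0 := by rwa [Ideal.zero_eq_bot]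
  constructor
  · have := Ideal.mul_mem_mul hz1 hw1
    rwa [← pow_add] at this
  · rw [← Ideal.dvd_span_singleton, ← Ideal.span_singleton_mul_span_singleton]
    rw [← Ideal.dvd_span_singleton] at hz1 hz2 hw1 hw2
    obtain ⟨I, hI⟩ := hz1
    obtain ⟨J, hJ⟩ := hw1
    have hPI : ¬ 𝔭 ∣ I := by
      rintro ⟨I', rfl⟩
      exact hz2 ⟨I', by rw [hI, pow_succ]; ring⟩
    have hPJ : ¬ 𝔭 ∣ J := by
      rintro ⟨J', rfl⟩
      exact hw2 ⟨J', by rw [hJ, pow_succ]; ring⟩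
    intro hdvd
    rw [hI, hJ] at hdvd
    have : 𝔭 ^ (a + b) * 𝔭 ∣ 𝔭 ^ (a + b) * (I * J) := by
      rw [← pow_succ]
      have : 𝔭 ^ a * I * (𝔭 ^ b * J) = 𝔭 ^ (a + b) * (I * J) := by rw [pow_add]; ring
      rwa [this] at hdvd
    have h𝔭IJ : 𝔭 ∣ I * J :=
      (mul_dvd_mul_iff_left (pow_ne_zero _ h0)).mp this
    rcases hP.2.2 _ _ h𝔭IJ with h | h
    · exact hPI h
    · exact hPJ h

lemma aux_stable (h𝔭 : 𝔭.IsPrime) (hbot : 𝔭 ≠ ⊥) {x y : R} {b m : ℕ}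
    (hy : y ∉ 𝔭) (hm : (m : R) ∉ 𝔭) (hb : 1 ≤ b)
    (h1 : x - y ∈ 𝔭 ^ b) (h2 : x - y ∉ 𝔭 ^ (b + 1)) :
    x ^ m - y ^ m ∈ 𝔭 ^ b ∧ x ^ m - y ^ m ∉ 𝔭 ^ (b + 1) := by
  have hxy𝔭 : x - y ∈ 𝔭 := by
    have := Ideal.pow_le_pow_right hb h1
    rwa [pow_one] at this
  set S : R := ∑ i ∈ range m, x ^ i * y ^ (m - 1 - i) with hSdef
  have hstep : S - (m : R) * y ^ (m - 1) ∈ 𝔭 := by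
    have key : ∀ i ∈ range m, x ^ i * y ^ (m - 1 - i)
        = (x ^ i - y ^ i) * y ^ (m - 1 - i) + y ^ (m - 1) := by
      intro i hi
      rw [sub_mul, ← pow_add]
      have : i + (m - 1 - i) = m - 1 := by
        simp only [Finset.mem_range] at hi; omega
      rw [this]; ring
    rw [hSdef, Finset.sum_congr rfl key, Finset.sum_add_distrib, Finset.sum_const,
      card_range, nsmul_eq_mul, add_sub_cancel_right]
    refine Ideal.sum_mem _ (fun i _ => ?_)
    obtain ⟨c, hc⟩ := sub_dvd_pow_sub_pow x y i
    rw [hc, mul_assoc]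
    exact Ideal.mul_mem_right _ _ hxy𝔭
  have hS : S ∉ 𝔭 := by
    intro hS
    have hmem : (m : R) * y ^ (m - 1) ∈ 𝔭 := by
      have := Ideal.sub_mem 𝔭 hS hstep
      simpa using this
    rcases h𝔭.mem_or_mem hmem with h | h
    · exact hm h
    · exact hy (h𝔭.mem_of_pow_mem _ h)
  have hS0 : S ∈ 𝔭 ^ 0 := by rw [pow_zero, Ideal.one_eq_top]; trivial
  have hS1 : S ∉ 𝔭 ^ (0 + 1) := by rwa [zero_add, pow_one]
  have := aux_exact_mul h𝔭 hbot hS0 hS1 h1 h2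
  rwa [zero_add, hSdef, geom_sum₂_mul] at this

lemma aux_rise (h𝔭 : 𝔭.IsPrime) (hbot : 𝔭 ≠ ⊥) {x y : R} {p b : ℕ} (hp : p.Prime)
    (hy : y ∉ 𝔭) (hpmem : (p : R) ∈ 𝔭) (hpmem2 : (p : R) ∉ 𝔭 ^ 2)
    (hb : 1 ≤ b) (hb2 : p = 2 → 2 ≤ b)
    (h1 : x - y ∈ 𝔭 ^ b) (h2 : x - y ∉ 𝔭 ^ (b + 1)) :
    x ^ p - y ^ p ∈ 𝔭 ^ (b + 1) ∧ x ^ p - y ^ p ∉ 𝔭 ^ (b + 1 + 1) := by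
  have hxy𝔭 : x - y ∈ 𝔭 := by
    have := Ideal.pow_le_pow_right hb h1
    rwa [pow_one] at this
  set S : R := ∑ i ∈ range p, x ^ i * y ^ (p - 1 - i) with hSdef
  set c : ℕ := ∑ i ∈ range p, i with hcdef
  -- the crucial congruence mod 𝔭²
  have hcd : (c : R) * (y ^ (p - 2) * (x - y)) ∈ 𝔭 ^ 2 := by
    by_cases hp2 : p = 2
    · have hcc : c = 1 := by subst hp2; rw [hcdef]; decide
      rw [hcc]
      push_cast
      rw [one_mul]
      exact Ideal.mul_mem_left _ _ (Ideal.pow_le_pow_right (hb2 hp2) h1)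
    · have hdvd : p ∣ c := by
        have h2c : c * 2 = p * (p - 1) := Finset.sum_range_id_mul_two p
        have : p ∣ c * 2 := h2c ▸ Dvd.intro _ rfl
        rcases (Nat.Prime.dvd_mul hp).mp this with h | h
        · exact h
        · exact absurd ((Nat.prime_dvd_prime_iff_eq hp Nat.prime_two).mp h) hp2
      obtain ⟨k, hk⟩ := hdvd
      have hcR : (c : R) ∈ 𝔭 := by
        rw [hk]
        push_cast
        exact Ideal.mul_mem_right _ _ hpmem
      have := Ideal.mul_mem_mul hcR (Ideal.mul_mem_left _ (y ^ (p - 2)) hxy𝔭)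
      rwa [← sq] at this
  have hScong : S - (p : R) * y ^ (p - 1) ∈ 𝔭 ^ 2 := by
    -- work in the quotient ring
    set φ := Ideal.Quotient.mk (𝔭 ^ 2) with hφ
    rw [← Ideal.Quotient.eq_zero_iff_mem, map_sub]
    set Y := φ y with hY
    set D := φ (x - y) with hD
    have hD2 : D * D = 0 := by
      rw [hD, ← map_mul, Ideal.Quotient.eq_zero_iff_mem]
      have := Ideal.mul_mem_mul hxy𝔭 hxy𝔭
      rwa [← sq] at this
    have hX : φ x = Y + D := by rw [hY, hD, ← map_add]; ring_nf
    have bin : ∀ i : ℕ, (Y + D) ^ (i + 1) = Y ^ (i + 1) + (i + 1 : ℕ) * Y ^ i * D := by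
      intro i
      induction i with
      | zero => push_cast; ring
      | succ j ih =>
        rw [pow_succ (Y + D) (j + 1), ih]
        push_cast
        linear_combination ((j : R ⧸ 𝔭 ^ 2) + 1) * Y ^ j * hD2
    have hterm : ∀ i ∈ range p, φ x ^ i * Y ^ (p - 1 - i)
        = Y ^ (p - 1) + (i : ℕ) * Y ^ (p - 2) * D := by
      intro i hi
      rw [Finset.mem_range] at hi
      match i with
      | 0 => simp
      | (j + 1) =>
        rw [hX, bin j]
        have e1 : j + 1 + (p - 1 - (j + 1)) = p - 1 := by omega
        have e2 : j + (p - 1 - (j + 1)) = p - 2 := by omega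
        calc (Y ^ (j + 1) + (↑(j + 1) : R ⧸ 𝔭 ^ 2) * Y ^ j * D) * Y ^ (p - 1 - (j + 1))
            = Y ^ (j + 1 + (p - 1 - (j + 1)))
              + (↑(j + 1) : R ⧸ 𝔭 ^ 2) * Y ^ (j + (p - 1 - (j + 1))) * D := by
              rw [pow_add Y, pow_add Y]; ring
          _ = Y ^ (p - 1) + (↑(j + 1) : R ⧸ 𝔭 ^ 2) * Y ^ (p - 2) * D := by rw [e1, e2]
    have hSq : φ S = (p : R ⧸ 𝔭 ^ 2) * Y ^ (p - 1) + (c : R ⧸ 𝔭 ^ 2) * Y ^ (p - 2) * D := by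
      rw [hSdef, map_sum]
      have : ∀ i ∈ range p, φ (x ^ i * y ^ (p - 1 - i))
          = Y ^ (p - 1) + (i : ℕ) * Y ^ (p - 2) * D := by
        intro i hi
        rw [map_mul, map_pow, map_pow]
        exact hterm i hi
      rw [Finset.sum_congr rfl this, Finset.sum_add_distrib, Finset.sum_const, card_range,
        nsmul_eq_mul]
      congr 1
      rw [← Finset.sum_mul, ← Finset.sum_mul, ← Nat.cast_sum]
    have hczero : (c : R ⧸ 𝔭 ^ 2) * Y ^ (p - 2) * D = 0 := by
      have : (c : R ⧸ 𝔭 ^ 2) * Y ^ (p - 2) * D = φ ((c : R) * (y ^ (p - 2) * (x - y))) := by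
        rw [map_mul, map_mul, map_pow, map_natCast]; ring
      rw [this, Ideal.Quotient.eq_zero_iff_mem]
      exact hcd
    rw [hSq, hczero, add_zero, map_mul, map_pow, map_natCast, sub_self]
  -- p * y^(p-1) is exactly divisible once
  have hpy1 : (p : R) * y ^ (p - 1) ∈ 𝔭 := Ideal.mul_mem_right _ _ hpmem
  have hpy2 : (p : R) * y ^ (p - 1) ∉ 𝔭 ^ 2 := by
    intro hmem
    rw [mul_comm] at hmem
    exact hpmem2 (aux_primary h𝔭 hbot (fun h => hy (h𝔭.mem_of_pow_mem _ h)) hmem)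
  have hS1 : S ∈ 𝔭 ^ 1 := by
    rw [pow_one]
    have hrw : S = (S - (p : R) * y ^ (p - 1)) + (p : R) * y ^ (p - 1) := by ring
    rw [hrw]
    exact Ideal.add_mem _ (Ideal.pow_le_self two_ne_zero hScong) hpy1
  have hS2 : S ∉ 𝔭 ^ (1 + 1) := by
    intro hmem
    apply hpy2
    have hrw : (p : R) * y ^ (p - 1) = S - (S - (p : R) * y ^ (p - 1)) := by ring
    have h11 : 𝔭 ^ (1 + 1) = 𝔭 ^ 2 := by norm_num
    rw [hrw]
    exact Ideal.sub_mem _ (h11 ▸ hmem) hScong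
  have := aux_exact_mul h𝔭 hbot hS1 hS2 h1 h2
  rwa [hSdef, geom_sum₂_mul, add_comm 1 b] at this

lemma aux_add {γ lam : R} {n a b : ℕ}
    (ha : γ ^ a - lam ^ a ∈ 𝔭 ^ n) (hb : γ ^ b - lam ^ b ∈ 𝔭 ^ n) :
    γ ^ (a + b) - lam ^ (a + b) ∈ 𝔭 ^ n := by
  have hid : γ ^ (a + b) - lam ^ (a + b)
      = γ ^ a * (γ ^ b - lam ^ b) + lam ^ b * (γ ^ a - lam ^ a) := by
    rw [pow_add, pow_add]; ring
  rw [hid]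
  exact Ideal.add_mem _ (Ideal.mul_mem_left _ _ hb) (Ideal.mul_mem_left _ _ ha)

lemma aux_sub (h𝔭 : 𝔭.IsPrime) (hbot : 𝔭 ≠ ⊥) {γ lam : R} (hlam : lam ∉ 𝔭) {n a b : ℕ}
    (hab : γ ^ (a + b) - lam ^ (a + b) ∈ 𝔭 ^ n) (hb : γ ^ b - lam ^ b ∈ 𝔭 ^ n) :
    γ ^ a - lam ^ a ∈ 𝔭 ^ n := by
  have hid : lam ^ b * (γ ^ a - lam ^ a)
      = (γ ^ (a + b) - lam ^ (a + b)) - γ ^ a * (γ ^ b - lam ^ b) := by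
    rw [pow_add, pow_add]; ring
  have hmem : lam ^ b * (γ ^ a - lam ^ a) ∈ 𝔭 ^ n := by
    rw [hid]; exact Ideal.sub_mem _ hab (Ideal.mul_mem_left _ _ hb)
  exact aux_primary h𝔭 hbot (fun h => hlam (h𝔭.mem_of_pow_mem _ h)) hmem

lemma aux_dvd (h𝔭 : 𝔭.IsPrime) (hbot : 𝔭 ≠ ⊥) {γ lam : R} (hlam : lam ∉ 𝔭) {n τ : ℕ}
    (hτ : IsLeast {t : ℕ | 0 < t ∧ γ ^ t - lam ^ t ∈ 𝔭 ^ n} τ) :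
    ∀ t : ℕ, 0 < t → γ ^ t - lam ^ t ∈ 𝔭 ^ n → τ ∣ t := by
  have hmult : ∀ q : ℕ, γ ^ (τ * q) - lam ^ (τ * q) ∈ 𝔭 ^ n := by
    intro q
    induction q with
    | zero => simp
    | succ k ih =>
      have : τ * (k + 1) = τ * k + τ := by ring
      rw [this]
      exact aux_add ih hτ.1.2
  intro t ht hmem
  have hτpos : 0 < τ := hτ.1.1
  have hsplit : t % τ + τ * (t / τ) = t := Nat.mod_add_div t τ
  have hr : γ ^ (t % τ) - lam ^ (t % τ) ∈ 𝔭 ^ n := by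
    refine aux_sub h𝔭 hbot hlam (b := τ * (t / τ)) ?_ (hmult _)
    rw [hsplit]; exact hmem
  rcases Nat.eq_zero_or_pos (t % τ) with h0 | hpos
  · exact Nat.dvd_of_mod_eq_zero h0
  · have := hτ.2 ⟨hpos, hr⟩
    have hlt := Nat.mod_lt t hτpos
    omega
end Aux

/-- Let `p` be a rational prime unramified in the number field `K` and `𝔭` a
prime ideal of `𝒪_K` above `p`. Let `γ, λ ∈ 𝒪_K` be coprime to `𝔭` with `γ^t ≠ λ^t` for all
`t > 0`. Let `τ_*` be the minimal positive `t` with `γ^t ≡ λ^t (mod 𝔭)` (respectively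
`(mod 𝔭²)` if `p = 2`), and let `β = ν_𝔭(γ^{τ_*} − λ^{τ_*})`. Then for every `s ≥ 2`:
if `s ≤ β` then `τ_s(γ,λ) = τ_*`, and if `s ≥ β` then `τ_s(γ,λ) = τ_* · p^{s−β}`,
where `τ_s(γ,λ)` is the minimal positive `t` with `γ^t ≡ λ^t (mod 𝔭^s)`. -/
theorem stmt3 (K : Type*) [Field K] [NumberField K]
    (p : ℕ) (hp : p.Prime)
    (𝔭 : Ideal (𝓞 K)) (h𝔭 : 𝔭.IsPrime) (h𝔭bot : 𝔭 ≠ ⊥) (h𝔭p : (p : 𝓞 K) ∈ 𝔭)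
    (hram : Ideal.ramificationIdx' (Ideal.span {(p : ℤ)}) 𝔭 = 1)
    (γ lam : 𝓞 K) (hγ : γ ∉ 𝔭) (hlam : lam ∉ 𝔭)
    (hnd : ∀ t : ℕ, 0 < t → γ ^ t ≠ lam ^ t)
    (τstar : ℕ)
    (hτstar : IsLeast {t : ℕ | 0 < t ∧ γ ^ t - lam ^ t ∈ 𝔭 ^ (if p = 2 then 2 else 1)} τstar)
    (β : ℕ) (hβ₁ : γ ^ τstar - lam ^ τstar ∈ 𝔭 ^ β) (hβ₂ : γ ^ τstar - lam ^ τstar ∉ 𝔭 ^ (β + 1))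
    (s : ℕ) (hs : 2 ≤ s) :
    (s ≤ β → IsLeast {t : ℕ | 0 < t ∧ γ ^ t - lam ^ t ∈ 𝔭 ^ s} τstar) ∧
    (β ≤ s → IsLeast {t : ℕ | 0 < t ∧ γ ^ t - lam ^ t ∈ 𝔭 ^ s} (τstar * p ^ (s - β))) := by
  set s₀ : ℕ := if p = 2 then 2 else 1 with hs₀def
  have hτpos : 0 < τstar := hτstar.1.1
  have hτmem : γ ^ τstar - lam ^ τstar ∈ 𝔭 ^ s₀ := hτstar.1.2
  have hs₀1 : 1 ≤ s₀ := by rw [hs₀def]; split <;> omega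
  have hs₀2 : s₀ ≤ 2 := by rw [hs₀def]; split <;> omega
  -- p is not in 𝔭²  (unramifiedness)
  have hpm2 : (p : 𝓞 K) ∉ 𝔭 ^ 2 := by
    intro hmem
    have hmap : Ideal.map (algebraMap ℤ (𝓞 K)) (Ideal.span {(p : ℤ)}) ≤ 𝔭 ^ 2 := by
      rw [Ideal.map_span, Set.image_singleton, Ideal.span_singleton_le_iff_mem]
      simpa using hmem
    have h2mem : (2 : ℕ) ∈ {n : ℕ | Ideal.map (algebraMap ℤ (𝓞 K)) (Ideal.span {(p : ℤ)}) ≤ 𝔭 ^ n} := hmap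
    rw [Ideal.ramificationIdx'] at hram
    by_cases hbdd : BddAbove {n : ℕ | Ideal.map (algebraMap ℤ (𝓞 K)) (Ideal.span {(p : ℤ)}) ≤ 𝔭 ^ n}
    · have := le_csSup hbdd h2mem
      omega
    · rw [csSup_of_not_bddAbove hbdd, csSup_empty] at hram
      simp at hram
  -- naturals not divisible by p are invertible mod 𝔭
  have hcast : ∀ m : ℕ, ¬ p ∣ m → (m : 𝓞 K) ∉ 𝔭 := by
    intro m hm hmem
    have hco : Nat.gcd p m = 1 := (Nat.Prime.coprime_iff_not_dvd hp).mpr hm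
    have hbez := Nat.gcd_eq_gcd_ab p m
    rw [hco] at hbez
    have h1 : (1 : 𝓞 K) = (p : 𝓞 K) * ((Nat.gcdA p m : ℤ) : 𝓞 K)
        + (m : 𝓞 K) * ((Nat.gcdB p m : ℤ) : 𝓞 K) := by
      have := congrArg (fun z : ℤ => ((z : ℤ) : 𝓞 K)) hbez
      push_cast at this ⊢
      exact this
    have : (1 : 𝓞 K) ∈ 𝔭 := by
      rw [h1]
      exact Ideal.add_mem _ (Ideal.mul_mem_right _ _ h𝔭p) (Ideal.mul_mem_right _ _ hmem)
    exact h𝔭.ne_top (Ideal.eq_top_iff_one 𝔭 |>.mpr this)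
  -- β is at least s₀
  have hβs₀ : s₀ ≤ β := by
    by_contra h
    push_neg at h
    exact hβ₂ (Ideal.pow_le_pow_right (by omega) hτmem)
  have hβ1 : 1 ≤ β := le_trans hs₀1 hβs₀
  have hβp2 : p = 2 → 2 ≤ β := by
    intro h2
    refine le_trans ?_ hβs₀
    rw [hs₀def, if_pos h2]
  have hγpow : ∀ n : ℕ, γ ^ n ∉ 𝔭 := fun n h => hγ (h𝔭.mem_of_pow_mem _ h)
  have hlampow : ∀ n : ℕ, lam ^ n ∉ 𝔭 := fun n h => hlam (h𝔭.mem_of_pow_mem _ h)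
  -- exact valuation along p-power multiples of τstar
  have E : ∀ j : ℕ, γ ^ (τstar * p ^ j) - lam ^ (τstar * p ^ j) ∈ 𝔭 ^ (β + j)
      ∧ γ ^ (τstar * p ^ j) - lam ^ (τstar * p ^ j) ∉ 𝔭 ^ (β + j + 1) := by
    intro j
    induction j with
    | zero => simpa using ⟨hβ₁, hβ₂⟩
    | succ k ih =>
      have hexp : τstar * p ^ (k + 1) = τstar * p ^ k * p := by rw [pow_succ]; ring
      have hx : γ ^ (τstar * p ^ (k + 1)) = (γ ^ (τstar * p ^ k)) ^ p := by
        rw [hexp, pow_mul]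
      have hy : lam ^ (τstar * p ^ (k + 1)) = (lam ^ (τstar * p ^ k)) ^ p := by
        rw [hexp, pow_mul]
      rw [hx, hy]
      have := aux_rise h𝔭 h𝔭bot hp (hlampow _) h𝔭p hpm2 (by omega)
        (fun h2 => by have := hβp2 h2; omega) ih.1 ih.2
      constructor
      · have h1 := this.1
        have : β + k + 1 = β + (k + 1) := by omega
        rwa [this] at h1
      · have h2' := this.2
        have : β + k + 1 + 1 = β + (k + 1) + 1 := by omega
        rwa [this] at h2'
  -- exact valuation for general multiples of τstar
  have exactK : ∀ k : ℕ, 0 < k →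
      γ ^ (τstar * k) - lam ^ (τstar * k) ∈ 𝔭 ^ (β + k.factorization p)
      ∧ γ ^ (τstar * k) - lam ^ (τstar * k) ∉ 𝔭 ^ (β + k.factorization p + 1) := by
    intro k hk
    set c : ℕ := k.factorization p with hc
    set m : ℕ := k / p ^ c with hmdef
    have hkfac : p ^ c * m = k := Nat.ordProj_mul_ordCompl_eq_self k p
    have hmpos : 0 < m := Nat.ordCompl_pos p (by omega)
    have hpm : ¬ p ∣ m := Nat.not_dvd_ordCompl hp (by omega)
    have hexp : τstar * k = τstar * p ^ c * m := by rw [← hkfac]; ring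
    have hx : γ ^ (τstar * k) = (γ ^ (τstar * p ^ c)) ^ m := by rw [hexp, pow_mul]
    have hy : lam ^ (τstar * k) = (lam ^ (τstar * p ^ c)) ^ m := by rw [hexp, pow_mul]
    rw [hx, hy]
    exact aux_stable h𝔭 h𝔭bot (hlampow _) (hcast m hpm) (by omega) (E c).1 (E c).2
  -- minimal element divides everything at level s₀
  have hdvd₀ : ∀ t : ℕ, 0 < t → γ ^ t - lam ^ t ∈ 𝔭 ^ s₀ → τstar ∣ t :=
    aux_dvd h𝔭 h𝔭bot hlam hτstar
  have hdvds : ∀ t : ℕ, 0 < t → γ ^ t - lam ^ t ∈ 𝔭 ^ s → τstar ∣ t := by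
    intro t ht hmem
    exact hdvd₀ t ht (Ideal.pow_le_pow_right (by omega) hmem)
  constructor
  · -- case s ≤ β
    intro hsβ
    constructor
    · exact ⟨hτpos, Ideal.pow_le_pow_right hsβ hβ₁⟩
    · rintro t ⟨ht, hmem⟩
      exact Nat.le_of_dvd ht (hdvds t ht hmem)
  · -- case β ≤ s
    intro hβs
    constructor
    · constructor
      · exact Nat.mul_pos hτpos (pow_pos hp.pos _)
      · have hE := (E (s - β)).1
        have : β + (s - β) = s := by omega
        rw [this] at hE
        exact hE
    · rintro t ⟨ht, hmem⟩
      obtain ⟨k, hk⟩ := hdvds t ht hmem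
      have hkpos : 0 < k := by
        rcases Nat.eq_zero_or_pos k with h0 | h
        · rw [h0, Nat.mul_zero] at hk; omega
        · exact h
      have hEx := exactK k hkpos
      have hcge : s - β ≤ k.factorization p := by
        by_contra hlt
        push_neg at hlt
        have : s ≥ β + k.factorization p + 1 := by omega
        rw [hk] at hmem
        exact hEx.2 (Ideal.pow_le_pow_right this hmem)
      have hdvdk : p ^ (s - β) ∣ k :=
        dvd_trans (pow_dvd_pow p hcge) (Nat.ordProj_dvd k p)
      have : τstar * p ^ (s - β) ∣ t := by
        rw [hk]
        exact mul_dvd_mul_left τstar hdvdk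
      exact Nat.le_of_dvd ht this
end

section
/- Let f : ℝ → ℝ be an arbitrary function. Then for any integers M, N ≥ 1 and any integer a ≥ 0, |∑_{x=0}^{N−1} e(f(x))| ≤ (1/M²)·∑_{x=0}^{N−1} |∑_{y,z=1}^{M} e(f(x + ayz))| + 2aM². -/
open Finset

/-- `e(x) = exp(2 π i x)`. -/
noncomputable def eF (x : ℝ) : ℂ := Complex.exp (2 * Real.pi * Complex.I * x)

lemma eF_abs (x : ℝ) : ‖eF x‖ = 1 := by
  unfold eF
  rw [Complex.norm_exp]
  simp [Complex.mul_re, Complex.mul_im]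

lemma abs_sum_le_card (f : ℝ → ℝ) (s : Finset ℕ) :
    ‖∑ x ∈ s, eF (f x)‖ ≤ s.card := by
  calc ‖∑ x ∈ s, eF (f x)‖ ≤ ∑ x ∈ s, ‖eF (f x)‖ :=
        norm_sum_le _ _
    _ = s.card := by simp [eF_abs]

lemma shift_lemma (f : ℝ → ℝ) (N h : ℕ) :
    ‖(∑ x ∈ range N, eF (f x)) - ∑ x ∈ range N, eF (f ((x + h : ℕ)))‖ ≤ 2 * h := by
  have h1 : ∑ x ∈ range N, eF (f ((x + h : ℕ))) = ∑ x ∈ Finset.Ico h (N + h), eF (f x) := by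
    rw [Finset.sum_Ico_eq_sum_range]
    simp [add_comm, Nat.add_sub_cancel]
  have h2 : (range N : Finset ℕ) \ Finset.Ico h (N + h) ⊆ range h := by
    intro x hx
    simp only [mem_sdiff, mem_range, Finset.mem_Ico, not_and, not_lt] at hx
    simp only [mem_range]
    omega
  have h3 : Finset.Ico h (N + h) \ range N ⊆ Finset.Ico N (N + h) := by
    intro x hx
    simp only [mem_sdiff, mem_range, Finset.mem_Ico, not_lt] at hx
    simp only [Finset.mem_Ico]
    omega
  rw [h1, ← Finset.sum_sdiff_sub_sum_sdiff]
  calc ‖(∑ x ∈ range N \ Finset.Ico h (N + h), eF (f x)) -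
          ∑ x ∈ Finset.Ico h (N + h) \ range N, eF (f x)‖
      ≤ ‖∑ x ∈ range N \ Finset.Ico h (N + h), eF (f x)‖ +
          ‖∑ x ∈ Finset.Ico h (N + h) \ range N, eF (f x)‖ := by
        exact norm_sub_le (∑ x ∈ range N \ Finset.Ico h (N + h), eF (f x))
          (∑ x ∈ Finset.Ico h (N + h) \ range N, eF (f x))
    _ ≤ ((range N \ Finset.Ico h (N + h)).card : ℝ) +
          ((Finset.Ico h (N + h) \ range N).card : ℝ) := by
        exact add_le_add (abs_sum_le_card f _) (abs_sum_le_card f _)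
    _ ≤ (h : ℝ) + (h : ℝ) := by
        have c1 := Finset.card_le_card h2
        have c2 := Finset.card_le_card h3
        simp only [Finset.card_range, Nat.card_Ico] at c1 c2
        have : N + h - N = h := by omega
        rw [this] at c2
        exact add_le_add (by exact_mod_cast c1) (by exact_mod_cast c2)
    _ = 2 * h := by ring

/-- For an arbitrary function `f : ℝ → ℝ` and integers `M, N ≥ 1`, `a ≥ 0`,
`|∑_{x=0}^{N-1} e(f(x))| ≤ (1/M²)·∑_{x=0}^{N-1} |∑_{y,z=1}^{M} e(f(x + ayz))| + 2aM²`. -/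
theorem stmt13 (f : ℝ → ℝ) (M N : ℕ) (hM : 1 ≤ M) (hN : 1 ≤ N) (a : ℕ) :
    ‖∑ x ∈ Finset.range N, eF (f x)‖ ≤
      (1 / (M : ℝ) ^ 2) *
        ∑ x ∈ Finset.range N,
          ‖∑ y ∈ Finset.Icc 1 M, ∑ z ∈ Finset.Icc 1 M,
            eF (f ((x : ℝ) + (a : ℝ) * y * z))‖ +
      2 * a * (M : ℝ) ^ 2 := by
  set S := ∑ x ∈ range N, eF (f x) with hS
  set T : ℕ → ℕ → ℂ := fun y z => ∑ x ∈ range N, eF (f ((x : ℝ) + (a : ℝ) * y * z)) with hT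
  have key : ∀ y ∈ Finset.Icc 1 M, ∀ z ∈ Finset.Icc 1 M,
      ‖S - T y z‖ ≤ 2 * a * (M : ℝ) ^ 2 := by
    intro y hy z hz
    simp only [Finset.mem_Icc] at hy hz
    have harg : ∀ x : ℕ, ((x : ℝ) + (a : ℝ) * y * z) = ((x + a * y * z : ℕ) : ℝ) := by
      intro x; push_cast; ring
    have hT' : T y z = ∑ x ∈ range N, eF (f ((x + a * y * z : ℕ))) := by
      rw [hT]; exact Finset.sum_congr rfl fun x _ => by rw [harg]
    rw [hT']
    calc ‖S - ∑ x ∈ range N, eF (f ((x + a * y * z : ℕ)))‖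
        ≤ 2 * (a * y * z : ℕ) := shift_lemma f N (a * y * z)
      _ ≤ 2 * a * (M : ℝ) ^ 2 := by
          push_cast
          have hy' : (y : ℝ) ≤ M := by exact_mod_cast hy.2
          have hz' : (z : ℝ) ≤ M := by exact_mod_cast hz.2
          have hy0 : (0:ℝ) ≤ y := Nat.cast_nonneg _
          have hz0 : (0:ℝ) ≤ z := Nat.cast_nonneg _
          have ha0 : (0:ℝ) ≤ a := Nat.cast_nonneg _
          have hyz : (y : ℝ) * z ≤ (M : ℝ) * M := mul_le_mul hy' hz' hz0 (Nat.cast_nonneg M)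
          have := mul_le_mul_of_nonneg_left hyz ha0
          nlinarith
  -- M² S - ∑∑ T = ∑∑ (S - T)
  have hcard : (Finset.Icc 1 M).card = M := by simp
  have hMS : ((M : ℂ)^2) * S = ∑ y ∈ Finset.Icc 1 M, ∑ z ∈ Finset.Icc 1 M, S := by
    rw [Finset.sum_const, Finset.sum_const, hcard]
    simp [pow_two]; ring
  have big : ‖((M : ℂ)^2) * S -
      ∑ y ∈ Finset.Icc 1 M, ∑ z ∈ Finset.Icc 1 M, T y z‖ ≤
      (M : ℝ)^2 * (2 * a * (M : ℝ)^2) := by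
    rw [hMS, ← Finset.sum_sub_distrib]
    have : ∀ y ∈ Finset.Icc 1 M, (∑ z ∈ Finset.Icc 1 M, S) - (∑ z ∈ Finset.Icc 1 M, T y z)
        = ∑ z ∈ Finset.Icc 1 M, (S - T y z) := fun y _ => (Finset.sum_sub_distrib _ _).symm
    rw [Finset.sum_congr rfl this]
    calc ‖∑ y ∈ Finset.Icc 1 M, ∑ z ∈ Finset.Icc 1 M, (S - T y z)‖
        ≤ ∑ y ∈ Finset.Icc 1 M, ∑ z ∈ Finset.Icc 1 M, ‖S - T y z‖ := by
          refine (norm_sum_le _ _).trans ?_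
          exact Finset.sum_le_sum fun y hy => norm_sum_le _ _
      _ ≤ ∑ y ∈ Finset.Icc 1 M, ∑ z ∈ Finset.Icc 1 M, (2 * a * (M : ℝ)^2) := by
          exact Finset.sum_le_sum fun y hy => Finset.sum_le_sum fun z hz => key y hy z hz
      _ = (M : ℝ)^2 * (2 * a * (M : ℝ)^2) := by
          rw [Finset.sum_const, Finset.sum_const, hcard]
          simp [pow_two]; ring
  -- swap summation order
  have hswap : ∑ y ∈ Finset.Icc 1 M, ∑ z ∈ Finset.Icc 1 M, T y z =
      ∑ x ∈ range N, ∑ y ∈ Finset.Icc 1 M, ∑ z ∈ Finset.Icc 1 M,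
        eF (f ((x : ℝ) + (a : ℝ) * y * z)) := by
    rw [hT]
    calc ∑ y ∈ Finset.Icc 1 M, ∑ z ∈ Finset.Icc 1 M, ∑ x ∈ range N,
          eF (f ((x : ℝ) + (a : ℝ) * y * z))
        = ∑ y ∈ Finset.Icc 1 M, ∑ x ∈ range N, ∑ z ∈ Finset.Icc 1 M,
          eF (f ((x : ℝ) + (a : ℝ) * y * z)) :=
          Finset.sum_congr rfl fun y _ => Finset.sum_comm
      _ = ∑ x ∈ range N, ∑ y ∈ Finset.Icc 1 M, ∑ z ∈ Finset.Icc 1 M,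
          eF (f ((x : ℝ) + (a : ℝ) * y * z)) := Finset.sum_comm
  set X := ∑ x ∈ range N, ‖∑ y ∈ Finset.Icc 1 M, ∑ z ∈ Finset.Icc 1 M,
      eF (f ((x : ℝ) + (a : ℝ) * y * z))‖ with hX
  have habsT : ‖∑ y ∈ Finset.Icc 1 M, ∑ z ∈ Finset.Icc 1 M, T y z‖ ≤ X := by
    rw [hswap, hX]
    exact norm_sum_le _ _
  have hmain : (M : ℝ)^2 * ‖S‖ ≤ X + (M : ℝ)^2 * (2 * a * (M : ℝ)^2) := by
    have h1 : ‖((M : ℂ)^2) * S‖ = (M : ℝ)^2 * ‖S‖ := by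
      rw [norm_mul]
      congr 1
      simp [Complex.norm_natCast]
    have h2 : (M : ℝ)^2 * ‖S‖ ≤
        ‖∑ y ∈ Finset.Icc 1 M, ∑ z ∈ Finset.Icc 1 M, T y z‖ +
        (M : ℝ)^2 * (2 * a * (M : ℝ)^2) := by
      rw [← h1]
      have h4 := norm_add_le (((M : ℂ)^2) * S -
          ∑ y ∈ Finset.Icc 1 M, ∑ z ∈ Finset.Icc 1 M, T y z)
          (∑ y ∈ Finset.Icc 1 M, ∑ z ∈ Finset.Icc 1 M, T y z)
      rw [sub_add_cancel] at h4
      calc ‖((M : ℂ)^2) * S‖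
          ≤ ‖((M : ℂ)^2) * S -
              ∑ y ∈ Finset.Icc 1 M, ∑ z ∈ Finset.Icc 1 M, T y z‖ +
            ‖∑ y ∈ Finset.Icc 1 M, ∑ z ∈ Finset.Icc 1 M, T y z‖ := h4
        _ ≤ (M : ℝ)^2 * (2 * a * (M : ℝ)^2) +
            ‖∑ y ∈ Finset.Icc 1 M, ∑ z ∈ Finset.Icc 1 M, T y z‖ :=
            add_le_add_left big _
        _ = ‖∑ y ∈ Finset.Icc 1 M, ∑ z ∈ Finset.Icc 1 M, T y z‖ +
            (M : ℝ)^2 * (2 * a * (M : ℝ)^2) := by ring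
    linarith [habsT]
  have hM2 : (0 : ℝ) < (M : ℝ)^2 := by positivity
  have : ‖S‖ = (1 / (M : ℝ)^2) * ((M : ℝ)^2 * ‖S‖) := by
    field_simp
  rw [this]
  calc (1 / (M : ℝ)^2) * ((M : ℝ)^2 * ‖S‖)
      ≤ (1 / (M : ℝ)^2) * (X + (M : ℝ)^2 * (2 * a * (M : ℝ)^2)) := by
        apply mul_le_mul_of_nonneg_left hmain (by positivity)
    _ = (1 / (M : ℝ)^2) * X + 2 * a * (M : ℝ)^2 := by
        field_simp
end

section
/- Let p be a prime and A ∈ GL_d(ℤ) with det A coprime to p. If the characteristic polynomial f of A is irreducible modulo p, then any p-primitive vectors u, v ∈ 𝓡_t^d form a proper pair: the sequence u_n = v·Aⁿ·u does not satisfy any linear recurrence relation modulo p of length less than d. -/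
open Polynomial Matrix Finset

/-- The pair `(u, v)` is *proper* for `A` modulo `p` if the sequence `u_n = v·Aⁿ·u` does not
satisfy any linear recurrence relation modulo `p` of length less than `d`. -/
def Proper (p d : ℕ) (A : Matrix (Fin d) (Fin d) ℤ) (u v : Fin d → ℤ) : Prop :=
  ∀ e : ℕ, e < d → ∀ b : Fin e → ZMod p,
    ¬ (∀ n : ℕ, ((v ⬝ᵥ (A ^ (n + e)).mulVec u : ℤ) : ZMod p) =
        ∑ i : Fin e, b i * ((v ⬝ᵥ (A ^ (n + (i : ℕ))).mulVec u : ℤ) : ZMod p))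

/-!
Reduce modulo `p`: over `𝔽_p` the matrix `B = A mod p` has irreducible characteristic polynomial
`f` of degree `d`, so `q(B)` is invertible for every nonzero `q` of degree `< d`. A recurrence
`uₙ₊ₑ = Σ bᵢ uₙ₊ᵢ` with `e < d` is the statement `v·Bⁿ·w = 0` for all `n`, where
`w = g(B) u ≠ 0` for `g = Xᵉ - Σ bᵢ Xⁱ`. Every nonzero `w` is a cyclic vector of `B`, because
`q ↦ q(B) w` is injective on the `d`-dimensional space of polynomials of degree `< d`; hence
`v = 0`.
-/

namespace Matrix

variable {K ι : Type*} [Field K] [Fintype ι] [DecidableEq ι] {B : Matrix ι ι K}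

theorem not_charpoly_dvd_of_degree_lt {q : K[X]} (hq : q ≠ 0)
    (hdeg : q.degree < Fintype.card ι) : ¬ B.charpoly ∣ q := fun h =>
  (degree_le_of_dvd h hq).not_gt (B.charpoly_degree_eq_dim ▸ hdeg)

theorem isUnit_aeval_of_irreducible_charpoly (hB : Irreducible B.charpoly) {q : K[X]}
    (hq : ¬ B.charpoly ∣ q) : IsUnit (aeval B q) := by
  obtain ⟨a, c, hac⟩ := hB.coprime_iff_not_dvd.mpr hq
  have hinv : aeval B c * aeval B q = 1 := by
    simpa [aeval_self_charpoly] using congrArg (aeval B) hac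
  exact IsUnit.of_mul_eq_one_right _ hinv

theorem exists_aeval_mulVec_eq (hB : Irreducible B.charpoly) {w : ι → K} (hw : w ≠ 0)
    (x : ι → K) : ∃ q : K[X], aeval B q *ᵥ w = x := by
  let n := Fintype.card ι
  let Φ : degreeLT K n →ₗ[K] ι → K :=
    (mulVecBilin K K).flip w ∘ₗ (aeval B).toLinearMap ∘ₗ (degreeLT K n).subtype
  have hΦ : Function.Injective Φ := by
    rw [← LinearMap.ker_eq_bot, LinearMap.ker_eq_bot']
    rintro ⟨q, hq⟩ hΦq
    refine Subtype.ext (by_contra fun hq0 => hw ?_)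
    have hunit := isUnit_aeval_of_irreducible_charpoly hB
      (not_charpoly_dvd_of_degree_lt hq0 (mem_degreeLT.mp hq))
    exact mulVec_injective_iff_isUnit.mpr hunit (by simpa [Φ] using hΦq)
  have : FiniteDimensional K (degreeLT K n) := (degreeLTEquiv K n).symm.finiteDimensional
  have hrank : Module.finrank K (degreeLT K n) = Module.finrank K (ι → K) := by
    rw [(degreeLTEquiv K n).finrank_eq, Module.finrank_fin_fun, Module.finrank_pi]
  obtain ⟨⟨q, _⟩, hq⟩ :=
    (LinearMap.injective_iff_surjective_of_finrank_eq_finrank hrank).mp hΦ x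
  exact ⟨q, hq⟩

theorem eq_zero_of_forall_dotProduct_pow_mulVec_eq_zero (hB : Irreducible B.charpoly)
    {v w : ι → K} (hw : w ≠ 0) (h : ∀ n : ℕ, v ⬝ᵥ (B ^ n) *ᵥ w = 0) : v = 0 := by
  refine dotProduct_eq_zero v fun x => ?_
  obtain ⟨q, rfl⟩ := exists_aeval_mulVec_eq hB hw x
  simp [aeval_eq_sum_range, sum_mulVec, dotProduct_sum, smul_mulVec, h]

theorem not_linearRecurrence_of_irreducible_charpoly (hB : Irreducible B.charpoly)
    {u v : ι → K} (hu : u ≠ 0) (hv : v ≠ 0) {e : ℕ} (he : e < Fintype.card ι) (b : Fin e → K) :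
    ¬ ∀ n : ℕ, v ⬝ᵥ (B ^ (n + e)) *ᵥ u = ∑ i : Fin e, b i * v ⬝ᵥ (B ^ (n + i)) *ᵥ u := by
  intro hrec
  set g : K[X] := X ^ e - ∑ i : Fin e, C (b i) * X ^ (i : ℕ)
  have hg : g.degree = e := by
    rw [degree_sub_eq_left_of_degree_lt] <;> simp [degree_sum_fin_lt]
  have hunit := isUnit_aeval_of_irreducible_charpoly hB
    (not_charpoly_dvd_of_degree_lt (q := g) (by simp [← degree_eq_bot, hg]) (by simpa [hg]))
  refine hv (eq_zero_of_forall_dotProduct_pow_mulVec_eq_zero hB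
    (w := aeval B g *ᵥ u) ?_ fun n => ?_)
  · simpa using (mulVec_injective_iff_isUnit.mpr hunit).ne hu
  · have hBg : B ^ n * aeval B g = B ^ (n + e) - ∑ i : Fin e, b i • B ^ (n + i) := by
      simp [g, mul_sub, mul_sum, pow_add, Algebra.smul_def, Algebra.commutes, mul_assoc]
    rw [mulVec_mulVec, hBg, sub_mulVec, dotProduct_sub, sum_mulVec, dotProduct_sum, hrec n]
    simp [smul_mulVec]

end Matrix

theorem RingHom.map_dotProduct_pow_mulVec {R S ι : Type*} [CommRing R] [CommRing S] [Fintype ι]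
    [DecidableEq ι] (φ : R →+* S) (A : Matrix ι ι R) (u v : ι → R) (m : ℕ) :
    φ (v ⬝ᵥ (A ^ m) *ᵥ u) = (φ ∘ v) ⬝ᵥ (A.map φ ^ m) *ᵥ (φ ∘ u) := by
  rw [φ.map_dotProduct, ← Matrix.map_pow]
  exact congrArg _ (funext (φ.map_mulVec _ _))

theorem ZMod.intCast_comp_ne_zero {ι : Type*} {p : ℕ} {u : ι → ℤ} (hu : ∃ i, ¬ (p : ℤ) ∣ u i) :
    Int.castRingHom (ZMod p) ∘ u ≠ 0 := fun h => by
  obtain ⟨i, hi⟩ := hu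
  exact hi ((ZMod.intCast_zmod_eq_zero_iff_dvd _ _).mp (congrFun h i))

theorem stmt16_general (p d : ℕ) (hp : p.Prime)
    (A : Matrix (Fin d) (Fin d) ℤ)
    (hirr : Irreducible (A.charpoly.map (Int.castRingHom (ZMod p))))
    (u v : Fin d → ℤ)
    (hu : ∃ i, ¬ (p : ℤ) ∣ u i) (hv : ∃ i, ¬ (p : ℤ) ∣ v i) :
    Proper p d A u v := by
  have : Fact p.Prime := ⟨hp⟩
  set φ := Int.castRingHom (ZMod p)
  have hcast (m : ℕ) : ((v ⬝ᵥ (A ^ m) *ᵥ u : ℤ) : ZMod p) = (φ ∘ v) ⬝ᵥ (A.map φ ^ m) *ᵥ (φ ∘ u) :=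
    φ.map_dotProduct_pow_mulVec A u v m
  intro e he b hrec
  refine not_linearRecurrence_of_irreducible_charpoly (B := A.map φ) (by rwa [charpoly_map])
    (ZMod.intCast_comp_ne_zero hu) (ZMod.intCast_comp_ne_zero hv) (by simpa using he) b
    fun n => ?_
  simpa only [hcast] using hrec n

/-- Let `p` be a prime and `A ∈ GL_d(ℤ)` with `det A` coprime to `p`. If the
characteristic polynomial `f` of `A` is irreducible modulo `p`, then any `p`-primitive vectors
`u, v` form a proper pair. -/
theorem stmt16 (p d : ℕ) (hp : p.Prime) (hd : 0 < d)
    (A : Matrix (Fin d) (Fin d) ℤ) (hA : IsUnit A.det) (hgcd : Int.gcd A.det p = 1)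
    (hirr : Irreducible (A.charpoly.map (Int.castRingHom (ZMod p))))
    (u v : Fin d → ℤ)
    (hu : ∃ i, ¬ (p : ℤ) ∣ u i) (hv : ∃ i, ¬ (p : ℤ) ∣ v i) :
    Proper p d A u v :=
  stmt16_general p d hp A hirr u v hu hv
end
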